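/- arXiv:2502.03265 — 3 statements merged into one kernel-verified Lean document; each statement's English description precedes it below -/
import Mathlib

section
/- Let $A \in \mathbb{R}^{n \times n}$ be invertible with $A - I$ invertible, let $\Phi \in \mathbb{R}^{n \times m}$ and $\Theta \in \mathbb{R}^{m \times n}$ be such that $\Theta A \Phi - I \in \mathbb{R}^{m \times m}$ is invertible (so that in particular $A^{-1} - \Phi\Theta$ and $A^{-1} - I$ are invertible), and let $b \in \mathbb{R}^{n}$. Define $x^* = (A - I)^{-1} b$, $x^*_{QN} = (\Theta A \Phi - I)^{-1} \Theta b$, and the interpolation error $e_{QN} = x^* - \Phi x^*_{QN}$. Then $e_{QN} = (\Phi\Theta - I) b + \big( \Phi\Theta (A^{-1} - \Phi\Theta)^{-1} \Phi\Theta - (A^{-1} - I)^{-1} \big) b$. -/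
open Matrix

/-- Interpolation error formula for time adaptive QNWR (linear, fixed time grids):
`e_QN = (ΦΘ - I) b + (ΦΘ (A⁻¹ - ΦΘ)⁻¹ ΦΘ - (A⁻¹ - I)⁻¹) b`. -/
theorem qnwr_interpolation_error {n m : ℕ}
    (A : Matrix (Fin n) (Fin n) ℝ)
    (Φ : Matrix (Fin n) (Fin m) ℝ)
    (Θ : Matrix (Fin m) (Fin n) ℝ)
    (b : Fin n → ℝ)
    (hA : IsUnit A.det)
    (hAI : IsUnit (A - 1).det)
    (hΘAΦ : IsUnit (Θ * A * Φ - 1).det)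
    (xstar : Fin n → ℝ) (hxstar : xstar = (A - 1)⁻¹ *ᵥ b)
    (xQNstar : Fin m → ℝ) (hxQNstar : xQNstar = (Θ * A * Φ - 1)⁻¹ *ᵥ (Θ *ᵥ b))
    (eQN : Fin n → ℝ) (heQN : eQN = xstar - Φ *ᵥ xQNstar) :
    eQN = (Φ * Θ - 1) *ᵥ b
      + (Φ * Θ * (A⁻¹ - Φ * Θ)⁻¹ * (Φ * Θ) - (A⁻¹ - 1)⁻¹) *ᵥ b := by
  subst hxstar hxQNstar heQN
  set P : Matrix (Fin n) (Fin n) ℝ := Φ * Θ with hP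
  -- determinant facts
  have hdet1 : IsUnit (1 - Θ * A * Φ).det := by
    have h : (1 - Θ * A * Φ) = -(Θ * A * Φ - 1) := (neg_sub _ _).symm
    rw [h, Matrix.det_neg]
    exact (IsUnit.pow _ (isUnit_one.neg)).mul hΘAΦ
  have hdetAP : IsUnit (1 - A * P).det := by
    have h : (1 - A * P) = 1 + (A * Φ) * (-Θ) := by
      rw [Matrix.mul_neg, ← sub_eq_add_neg, hP, Matrix.mul_assoc]
    have h2 : (1 : Matrix (Fin m) (Fin m) ℝ) + (-Θ) * (A * Φ) = 1 - Θ * A * Φ := by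
      rw [Matrix.neg_mul, ← sub_eq_add_neg, ← Matrix.mul_assoc]
    rw [h, Matrix.det_one_add_mul_comm, h2]
    exact hdet1
  -- inverse identities
  have hinv1 : (Θ * A * Φ - 1)⁻¹ = -(1 - Θ * A * Φ)⁻¹ := by
    apply Matrix.inv_eq_right_inv
    have h : (Θ * A * Φ - 1) * -(1 - Θ * A * Φ)⁻¹
        = (1 - Θ * A * Φ) * (1 - Θ * A * Φ)⁻¹ := by
      rw [Matrix.mul_neg, ← Matrix.neg_mul, neg_sub]
    rw [h, Matrix.mul_nonsing_inv _ hdet1]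
  have keyP : A⁻¹ - P = A⁻¹ * (1 - A * P) := by
    rw [Matrix.mul_sub, mul_one, ← Matrix.mul_assoc, Matrix.nonsing_inv_mul _ hA,
      Matrix.one_mul]
  have hinv2 : (A⁻¹ - P)⁻¹ = (1 - A * P)⁻¹ * A := by
    apply Matrix.inv_eq_right_inv
    rw [keyP, Matrix.mul_assoc, ← Matrix.mul_assoc (1 - A * P),
      Matrix.mul_nonsing_inv _ hdetAP, Matrix.one_mul, Matrix.nonsing_inv_mul _ hA]
  have key1 : A⁻¹ - 1 = -(A⁻¹ * (A - 1)) := by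
    rw [Matrix.mul_sub, mul_one, Matrix.nonsing_inv_mul _ hA, neg_sub]
  have hinv3 : (A⁻¹ - 1)⁻¹ = -((A - 1)⁻¹ * A) := by
    apply Matrix.inv_eq_right_inv
    rw [key1, neg_mul_neg, Matrix.mul_assoc, ← Matrix.mul_assoc (A - 1),
      Matrix.mul_nonsing_inv _ hAI, Matrix.one_mul, Matrix.nonsing_inv_mul _ hA]
  -- push-through identity
  have comm : (1 - Θ * A * Φ) * Θ = Θ * (1 - A * P) := by
    simp only [Matrix.sub_mul, Matrix.mul_sub, Matrix.one_mul, Matrix.mul_one, hP,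
      Matrix.mul_assoc]
  have h1 : (1 - Θ * A * Φ) * (Θ * (1 - A * P)⁻¹) = Θ := by
    rw [← Matrix.mul_assoc, comm, Matrix.mul_assoc, Matrix.mul_nonsing_inv _ hdetAP,
      Matrix.mul_one]
  have swap2 : Θ * (1 - A * P)⁻¹ = (1 - Θ * A * Φ)⁻¹ * Θ := by
    calc Θ * (1 - A * P)⁻¹
        = (1 - Θ * A * Φ)⁻¹ * ((1 - Θ * A * Φ) * (Θ * (1 - A * P)⁻¹)) := by
          rw [← Matrix.mul_assoc ((1 - Θ * A * Φ)⁻¹) (1 - Θ * A * Φ)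
            (Θ * (1 - A * P)⁻¹), Matrix.nonsing_inv_mul _ hdet1, Matrix.one_mul]
      _ = (1 - Θ * A * Φ)⁻¹ * Θ := by rw [h1]
  have hpt : Φ * (1 - Θ * A * Φ)⁻¹ * Θ = P * (1 - A * P)⁻¹ := by
    rw [Matrix.mul_assoc, ← swap2, ← Matrix.mul_assoc]
  -- reduce to a matrix identity
  rw [Matrix.mulVec_mulVec, Matrix.mulVec_mulVec, ← Matrix.sub_mulVec,
    ← Matrix.add_mulVec]
  congr 1
  rw [hinv1, hinv2, hinv3]
  have hneg : Φ * -(1 - Θ * A * Φ)⁻¹ * Θ = -(P * (1 - A * P)⁻¹) := by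
    rw [Matrix.mul_neg, Matrix.neg_mul, hpt]
  rw [hneg]
  have hXP : P * (1 - A * P)⁻¹ * A * P = P * (1 - A * P)⁻¹ - P := by
    have h : P * (1 - A * P)⁻¹ * A * P
        = P * (1 - A * P)⁻¹ - P * ((1 - A * P)⁻¹ * (1 - A * P)) := by noncomm_ring
    rw [h, Matrix.nonsing_inv_mul _ hdetAP, mul_one]
  have hYA : (A - 1)⁻¹ * A = (A - 1)⁻¹ + 1 := by
    have h : (A - 1)⁻¹ * A = (A - 1)⁻¹ * (A - 1) + (A - 1)⁻¹ := by noncomm_ring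
    rw [h, Matrix.nonsing_inv_mul _ hAI, add_comm]
  have hmid : P * ((1 - A * P)⁻¹ * A) * P = P * (1 - A * P)⁻¹ * A * P := by
    simp only [Matrix.mul_assoc]
  rw [hmid, hXP, hYA]
  noncomm_ring
end

section
/- Let $A \in \mathbb{R}^{n \times n}$ with $n = d N_2$, $b \in \mathbb{R}^{n}$, and let $\Phi \in \mathbb{R}^{n \times m}$, $\Theta \in \mathbb{R}^{m \times n}$ with $m = d N_{QN}$. Let $G_2 = [0, \dots, 0, I] \in \mathbb{R}^{d \times n}$ and $G_{QN} = [0, \dots, 0, I] \in \mathbb{R}^{d \times m}$ be the matrices extracting the last $d$-dimensional block (the final time step). Assume the interpolation matrices preserve the final time step, i.e. $G_2 \Phi = G_{QN}$ and $G_{QN} \Theta = G_2$. If $x^*_{QN} \in \mathbb{R}^{m}$ satisfies the auxiliary fixed point equation $(\Theta A \Phi - I) x^*_{QN} + \Theta b = 0$, then the residual of the last time step vanishes: $G_2\big( (A - I) \Phi x^*_{QN} + b \big) = 0$. -/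
open Matrix

/-- The matrix `[0, …, 0, I] ∈ ℝ^{d × (N d)}` extracting the last `d`-dimensional
block (the final time step) from a vector on a time grid with `N` points. -/
def lastBlock (N d : ℕ) : Matrix (Fin d) (Fin N × Fin d) ℝ :=
  Matrix.of fun i p => if p.1.val = N - 1 ∧ p.2 = i then 1 else 0

/-- Termination theorem for time adaptive QNWR: if the interpolation matrices
preserve the final time step and `x*_QN` solves the auxiliary fixed point equation
`(ΘAΦ - I) x*_QN + Θ b = 0`, then the residual of the last time step vanishes:
`G₂ ((A - I) Φ x*_QN + b) = 0`. -/
theorem qnwr_final_step_residual_zero {d N2 NQN : ℕ}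
    (A : Matrix (Fin N2 × Fin d) (Fin N2 × Fin d) ℝ)
    (b : Fin N2 × Fin d → ℝ)
    (Φ : Matrix (Fin N2 × Fin d) (Fin NQN × Fin d) ℝ)
    (Θ : Matrix (Fin NQN × Fin d) (Fin N2 × Fin d) ℝ)
    (hΦ : lastBlock N2 d * Φ = lastBlock NQN d)
    (hΘ : lastBlock NQN d * Θ = lastBlock N2 d)
    (xQNstar : Fin NQN × Fin d → ℝ)
    (hfix : (Θ * A * Φ - 1) *ᵥ xQNstar + Θ *ᵥ b = 0) :
    lastBlock N2 d *ᵥ ((A - 1) *ᵥ (Φ *ᵥ xQNstar) + b) = 0 := by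
  have h1 : (Θ * A * Φ) *ᵥ xQNstar - xQNstar + Θ *ᵥ b = 0 := by
    simpa [sub_mulVec, one_mulVec] using hfix
  have e1 : ∀ v : Fin N2 × Fin d → ℝ,
      lastBlock N2 d *ᵥ v = lastBlock NQN d *ᵥ (Θ *ᵥ v) := by
    intro v; rw [mulVec_mulVec, hΘ]
  have e2 : ∀ w : Fin NQN × Fin d → ℝ,
      lastBlock N2 d *ᵥ (Φ *ᵥ w) = lastBlock NQN d *ᵥ w := by
    intro w; rw [mulVec_mulVec, hΦ]
  calc lastBlock N2 d *ᵥ ((A - 1) *ᵥ (Φ *ᵥ xQNstar) + b)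
      = lastBlock N2 d *ᵥ (A *ᵥ (Φ *ᵥ xQNstar)) - lastBlock N2 d *ᵥ (Φ *ᵥ xQNstar)
        + lastBlock N2 d *ᵥ b := by
        rw [mulVec_add, sub_mulVec, one_mulVec, mulVec_sub]
    _ = lastBlock NQN d *ᵥ (Θ *ᵥ (A *ᵥ (Φ *ᵥ xQNstar))) - lastBlock NQN d *ᵥ xQNstar
        + lastBlock NQN d *ᵥ (Θ *ᵥ b) := by rw [e1 (A *ᵥ (Φ *ᵥ xQNstar)), e2, e1 b]
    _ = lastBlock NQN d *ᵥ ((Θ * A * Φ) *ᵥ xQNstar - xQNstar + Θ *ᵥ b) := by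
        simp [mulVec_add, mulVec_sub, mulVec_mulVec, Matrix.mul_assoc]
    _ = 0 := by rw [h1, mulVec_zero]
end

section
/- Let $A \in \mathbb{R}^{n \times n}$, $b \in \mathbb{R}^{n}$, $\Phi \in \mathbb{R}^{n \times m}$, $\Theta \in \mathbb{R}^{m \times n}$, and suppose $\Theta A \Phi - I \in \mathbb{R}^{m \times m}$ is invertible and the interpolation matrices preserve the final time step: $G_2 \Phi = G_{QN}$ and $G_{QN} \Theta = G_2$, where $G_2 = [0,\dots,0,I] \in \mathbb{R}^{d \times n}$ and $G_{QN} = [0,\dots,0,I] \in \mathbb{R}^{d \times m}$ extract the last $d$-dimensional block. Then the auxiliary fixed point equation $x_{QN} = \Theta A \Phi x_{QN} + \Theta b$ has a unique solution $x^*_{QN} = (\Theta A \Phi - I)^{-1}(-\Theta b)$, and the final-time-step residual of the original problem vanishes at the interpolated limit: $G_2\big((A-I)\Phi x^*_{QN} + b\big) = 0$. Consequently any iteration that converges to $x^*_{QN}$ satisfies the final-time-step termination criterion in the limit, independently of the chosen auxiliary grid. -/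
open Matrix

/-- If `ΘAΦ - I` is invertible and the interpolation matrices preserve the final
time step, then the auxiliary fixed point equation `x = ΘAΦ x + Θ b` has the unique
solution `x*_QN = (ΘAΦ - I)⁻¹ (-Θ b)`, and the final-time-step residual of the
original problem vanishes at the interpolated limit:
`G₂ ((A - I) Φ x*_QN + b) = 0`. -/
theorem qnwr_unique_fixed_point_and_termination {d N2 NQN : ℕ}
    (A : Matrix (Fin N2 × Fin d) (Fin N2 × Fin d) ℝ)
    (b : Fin N2 × Fin d → ℝ)
    (Φ : Matrix (Fin N2 × Fin d) (Fin NQN × Fin d) ℝ)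
    (Θ : Matrix (Fin NQN × Fin d) (Fin N2 × Fin d) ℝ)
    (hInv : IsUnit (Θ * A * Φ - 1).det)
    (hΦ : lastBlock N2 d * Φ = lastBlock NQN d)
    (hΘ : lastBlock NQN d * Θ = lastBlock N2 d)
    (xQNstar : Fin NQN × Fin d → ℝ)
    (hxQNstar : xQNstar = (Θ * A * Φ - 1)⁻¹ *ᵥ (-(Θ *ᵥ b))) :
    (∀ xq : Fin NQN × Fin d → ℝ,
        xq = (Θ * A * Φ) *ᵥ xq + Θ *ᵥ b ↔ xq = xQNstar) ∧
      lastBlock N2 d *ᵥ ((A - 1) *ᵥ (Φ *ᵥ xQNstar) + b) = 0 := by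
  set M := Θ * A * Φ - 1 with hMdef
  have key : ∀ xq : Fin NQN × Fin d → ℝ,
      xq = (Θ * A * Φ) *ᵥ xq + Θ *ᵥ b ↔ xq = xQNstar := by
    intro xq
    have e : ∀ v, M *ᵥ v = (Θ * A * Φ) *ᵥ v - v := by
      intro v
      rw [hMdef, Matrix.sub_mulVec, Matrix.one_mulVec]
    constructor
    · intro h
      have h1 : M *ᵥ xq = -(Θ *ᵥ b) := by
        rw [e]; linear_combination -h
      calc xq = M⁻¹ *ᵥ (M *ᵥ xq) := by
            rw [Matrix.mulVec_mulVec, Matrix.nonsing_inv_mul M hInv, Matrix.one_mulVec]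
        _ = xQNstar := by rw [h1, hxQNstar]
    · intro h
      have h1 : M *ᵥ xq = -(Θ *ᵥ b) := by
        rw [h, hxQNstar, Matrix.mulVec_mulVec, Matrix.mul_nonsing_inv M hInv,
          Matrix.one_mulVec]
      rw [e] at h1
      linear_combination -h1
  refine ⟨key, ?_⟩
  have hfix : xQNstar = (Θ * A * Φ) *ᵥ xQNstar + Θ *ᵥ b := (key xQNstar).mpr rfl
  have h3 : (Θ * A * Φ) *ᵥ xQNstar = xQNstar - Θ *ᵥ b := by linear_combination -hfix
  have hba : lastBlock N2 d * A = lastBlock NQN d * Θ * A := by rw [hΘ]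
  calc lastBlock N2 d *ᵥ ((A - 1) *ᵥ (Φ *ᵥ xQNstar) + b)
      = lastBlock N2 d *ᵥ (A *ᵥ (Φ *ᵥ xQNstar)) - lastBlock N2 d *ᵥ (Φ *ᵥ xQNstar)
        + lastBlock N2 d *ᵥ b := by
        rw [Matrix.sub_mulVec, Matrix.one_mulVec, Matrix.mulVec_add, Matrix.mulVec_sub]
    _ = lastBlock NQN d *ᵥ ((Θ * A * Φ) *ᵥ xQNstar) - lastBlock NQN d *ᵥ xQNstar
        + lastBlock NQN d *ᵥ (Θ *ᵥ b) := by
        have t1 : lastBlock N2 d *ᵥ (A *ᵥ (Φ *ᵥ xQNstar))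
            = lastBlock NQN d *ᵥ ((Θ * A * Φ) *ᵥ xQNstar) := by
          rw [Matrix.mulVec_mulVec, Matrix.mulVec_mulVec, Matrix.mulVec_mulVec, ← hΘ]
          simp [Matrix.mul_assoc]
        have t2 : lastBlock N2 d *ᵥ (Φ *ᵥ xQNstar) = lastBlock NQN d *ᵥ xQNstar := by
          rw [Matrix.mulVec_mulVec, hΦ]
        have t3 : lastBlock N2 d *ᵥ b = lastBlock NQN d *ᵥ (Θ *ᵥ b) := by
          rw [Matrix.mulVec_mulVec, hΘ]
        rw [t1, t2, t3]
    _ = 0 := by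
        rw [h3, Matrix.mulVec_sub]
        abel
end
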